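/- Under the hypotheses of the two-filter fusion (E[x xᵀ] = I, E[x x₋ᵀ] = P₋, E[x x̄₊ᵀ] = P̄₊, E[x̄₊ x₋ᵀ] = P̄₊ P₋, Q₋ = I − P₋ and Q̄₊ = I − P̄₊ invertible, Q₋^{-1} + Q̄₊^{-1} − I invertible), the error covariance Q := E[(x − x̂)(x − x̂)ᵀ] of the fused estimate x̂ = Q (Q₋^{-1} x₋ + Q̄₊^{-1} x̄₊) satisfies Q^{-1} = Q₋^{-1} + Q̄₊^{-1} − I. -/

import Mathlib

/-!
With `R = Q₋⁻¹`, `T = Q̄₊⁻¹` and `P₋ = I - Q₋`, `P̄₊ = I - Q̄₊`, one has `R P₋ = R - I` and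
`T P̄₊ = T - I`. Together with `Q (R + T - I) = I` and `E[x̄₊ x₋ᵀ] = P̄₊ P₋`, these make the error
`e = x - x̂` uncorrelated with both `x₋` and `x̄₊`. Hence `E[e eᵀ] = E[e xᵀ]
= I - Q R P₋ - Q T P̄₊ = I - Q (R + T - 2I) = Q`.
-/

open Matrix MeasureTheory

/-- Cross-covariance matrix E[x yᵀ] of two (centered) random vectors. -/
noncomputable def cov {Ω : Type*} [MeasurableSpace Ω] (ℙ : Measure Ω) {n m : ℕ}
    (x : Ω → Fin n → ℝ) (y : Ω → Fin m → ℝ) : Matrix (Fin n) (Fin m) ℝ :=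
  Matrix.of fun i j => ∫ ω, x ω i * y ω j ∂ℙ

section Covariance

variable {Ω : Type*} [MeasurableSpace Ω] {ℙ : Measure Ω} {k l m n : ℕ}

lemma cov_transpose (x : Ω → Fin n → ℝ) (y : Ω → Fin m → ℝ) :
    (cov ℙ x y)ᵀ = cov ℙ y x := by
  ext i j
  simp only [cov, transpose_apply, of_apply, mul_comm]

lemma memLp_mulVec_apply (A : Matrix (Fin k) (Fin n) ℝ) {x : Ω → Fin n → ℝ}
    (hx : ∀ i, MemLp (fun ω => x ω i) 2 ℙ) (i : Fin k) :
    MemLp (fun ω => (A *ᵥ x ω) i) 2 ℙ := by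
  simp only [mulVec, dotProduct]
  exact memLp_finsetSum _ fun j _ => (hx j).const_mul (A i j)

lemma integrable_mul_of_memLp_two {f g : Ω → ℝ} (hf : MemLp f 2 ℙ) (hg : MemLp g 2 ℙ) :
    Integrable (fun ω => f ω * g ω) ℙ :=
  hf.integrable_mul hg

variable {x x' : Ω → Fin n → ℝ} {y : Ω → Fin m → ℝ}

lemma cov_add_left (hx : ∀ i, MemLp (fun ω => x ω i) 2 ℙ)
    (hx' : ∀ i, MemLp (fun ω => x' ω i) 2 ℙ) (hy : ∀ j, MemLp (fun ω => y ω j) 2 ℙ) :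
    cov ℙ (fun ω => x ω + x' ω) y = cov ℙ x y + cov ℙ x' y := by
  ext i j
  simp only [cov, of_apply, Matrix.add_apply, Pi.add_apply, add_mul]
  exact integral_add (integrable_mul_of_memLp_two (hx i) (hy j))
    (integrable_mul_of_memLp_two (hx' i) (hy j))

lemma cov_sub_left (hx : ∀ i, MemLp (fun ω => x ω i) 2 ℙ)
    (hx' : ∀ i, MemLp (fun ω => x' ω i) 2 ℙ) (hy : ∀ j, MemLp (fun ω => y ω j) 2 ℙ) :
    cov ℙ (fun ω => x ω - x' ω) y = cov ℙ x y - cov ℙ x' y := by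
  ext i j
  simp only [cov, of_apply, Matrix.sub_apply, Pi.sub_apply, sub_mul]
  exact integral_sub (integrable_mul_of_memLp_two (hx i) (hy j))
    (integrable_mul_of_memLp_two (hx' i) (hy j))

lemma cov_mulVec_left (A : Matrix (Fin k) (Fin n) ℝ) (hx : ∀ i, MemLp (fun ω => x ω i) 2 ℙ)
    (hy : ∀ j, MemLp (fun ω => y ω j) 2 ℙ) :
    cov ℙ (fun ω => A *ᵥ x ω) y = A * cov ℙ x y := by
  ext i j
  simp only [cov, of_apply, mul_apply, mulVec, dotProduct, Finset.sum_mul, mul_assoc]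
  rw [integral_finsetSum _ fun l _ =>
    (integrable_mul_of_memLp_two (hx l) (hy j)).const_mul (A i l)]
  simp only [integral_const_mul]

lemma cov_sub_right (hx : ∀ i, MemLp (fun ω => x ω i) 2 ℙ)
    (hx' : ∀ i, MemLp (fun ω => x' ω i) 2 ℙ) (hy : ∀ j, MemLp (fun ω => y ω j) 2 ℙ) :
    cov ℙ y (fun ω => x ω - x' ω) = cov ℙ y x - cov ℙ y x' := by
  rw [← cov_transpose, cov_sub_left hx hx' hy, transpose_sub, cov_transpose, cov_transpose]

variable {z : Ω → Fin k → ℝ}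

lemma cov_sub_mulVec_add_mulVec_left (A : Matrix (Fin n) (Fin m) ℝ)
    (B : Matrix (Fin n) (Fin k) ℝ) {w : Ω → Fin l → ℝ} (hx : ∀ i, MemLp (fun ω => x ω i) 2 ℙ)
    (hy : ∀ i, MemLp (fun ω => y ω i) 2 ℙ) (hz : ∀ i, MemLp (fun ω => z ω i) 2 ℙ)
    (hw : ∀ i, MemLp (fun ω => w ω i) 2 ℙ) :
    cov ℙ (fun ω => x ω - (A *ᵥ y ω + B *ᵥ z ω)) w =
      cov ℙ x w - A * cov ℙ y w - B * cov ℙ z w := by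
  have hAy := memLp_mulVec_apply A hy
  have hBz := memLp_mulVec_apply B hz
  have hxhat : ∀ i, MemLp (fun ω => (A *ᵥ y ω + B *ᵥ z ω) i) 2 ℙ :=
    fun i => (hAy i).add (hBz i)
  rw [cov_sub_left hx hxhat hw, cov_add_left hAy hBz hw,
    cov_mulVec_left A hy hw, cov_mulVec_left B hz hw, sub_add_eq_sub_sub]

lemma cov_self_eq_of_orthogonal (A : Matrix (Fin n) (Fin m) ℝ) (B : Matrix (Fin n) (Fin k) ℝ)
    (hx : ∀ i, MemLp (fun ω => x ω i) 2 ℙ)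
    (hy : ∀ i, MemLp (fun ω => y ω i) 2 ℙ) (hz : ∀ i, MemLp (fun ω => z ω i) 2 ℙ)
    (hey : cov ℙ (fun ω => x ω - (A *ᵥ y ω + B *ᵥ z ω)) y = 0)
    (hez : cov ℙ (fun ω => x ω - (A *ᵥ y ω + B *ᵥ z ω)) z = 0) :
    cov ℙ (fun ω => x ω - (A *ᵥ y ω + B *ᵥ z ω)) (fun ω => x ω - (A *ᵥ y ω + B *ᵥ z ω)) =
      cov ℙ (fun ω => x ω - (A *ᵥ y ω + B *ᵥ z ω)) x := by
  have hAy := memLp_mulVec_apply A hy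
  have hBz := memLp_mulVec_apply B hz
  have hxhat : ∀ i, MemLp (fun ω => (A *ᵥ y ω + B *ᵥ z ω) i) 2 ℙ :=
    fun i => (hAy i).add (hBz i)
  have he : ∀ i, MemLp (fun ω => (x ω - (A *ᵥ y ω + B *ᵥ z ω)) i) 2 ℙ :=
    fun i => (hx i).sub (hxhat i)
  rw [cov_sub_right hx hxhat he, ← cov_transpose (fun ω => A *ᵥ y ω + B *ᵥ z ω),
    cov_add_left hAy hBz he, cov_mulVec_left A hy he, cov_mulVec_left B hz he,
    ← cov_transpose _ y, ← cov_transpose _ z, hey, hez]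
  simp

end Covariance

section TwoFilter

variable {α : Type*} [Ring α] {P P' R T Q : α}

lemma mul_eq_sub_one_of_mul_one_sub (h : R * (1 - P) = 1) : R * P = R - 1 := by
  linear_combination (norm := noncomm_ring) -h

lemma two_filter_orthogonal_left (hT : T * (1 - P') = 1) (hQ : Q * (R + T - 1) = 1) :
    P - Q * R * P - Q * T * (P' * P) = 0 := by
  linear_combination (norm := noncomm_ring) -(Q * mul_eq_sub_one_of_mul_one_sub hT * P) - hQ * P

lemma two_filter_orthogonal_right (hR : R * (1 - P) = 1) (hQ : Q * (R + T - 1) = 1) :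
    P' - Q * R * (P * P') - Q * T * P' = 0 := by
  linear_combination (norm := noncomm_ring) -(Q * mul_eq_sub_one_of_mul_one_sub hR * P') - hQ * P'

lemma two_filter_error (hR : R * (1 - P) = 1) (hT : T * (1 - P') = 1)
    (hQ : Q * (R + T - 1) = 1) : 1 - Q * R * P - Q * T * P' = Q := by
  linear_combination (norm := noncomm_ring)
    -(Q * mul_eq_sub_one_of_mul_one_sub hR) - Q * mul_eq_sub_one_of_mul_one_sub hT - hQ

end TwoFilter

theorem stmt_11_general {Ω : Type*} [MeasurableSpace Ω] (ℙ : Measure Ω)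
    {n : ℕ} (x xm xbp xhat : Ω → Fin n → ℝ)
    (hx2 : ∀ i, MemLp (fun ω => x ω i) 2 ℙ)
    (hxm2 : ∀ i, MemLp (fun ω => xm ω i) 2 ℙ)
    (hxbp2 : ∀ i, MemLp (fun ω => xbp ω i) 2 ℙ)
    (hnorm : cov ℙ x x = 1)
    (Qm Qbp Q : Matrix (Fin n) (Fin n) ℝ)
    (hQm : Qm = 1 - cov ℙ xm xm) (hQbp : Qbp = 1 - cov ℙ xbp xbp)
    (hQminv : IsUnit Qm.det) (hQbpinv : IsUnit Qbp.det)
    (hcross1 : cov ℙ x xm = cov ℙ xm xm)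
    (hcross2 : cov ℙ x xbp = cov ℙ xbp xbp)
    (hcross3 : cov ℙ xbp xm = cov ℙ xbp xbp * cov ℙ xm xm)
    (hQinv : IsUnit (Qm⁻¹ + Qbp⁻¹ - 1).det)
    (hQ : Q = (Qm⁻¹ + Qbp⁻¹ - 1)⁻¹)
    (hxhat : xhat = fun ω => Q.mulVec (Qm⁻¹.mulVec (xm ω) + Qbp⁻¹.mulVec (xbp ω))) :
    (cov ℙ (fun ω => x ω - xhat ω) (fun ω => x ω - xhat ω))⁻¹ = Qm⁻¹ + Qbp⁻¹ - 1 := by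
  have hR : Qm⁻¹ * (1 - cov ℙ xm xm) = 1 := hQm ▸ nonsing_inv_mul Qm hQminv
  have hT : Qbp⁻¹ * (1 - cov ℙ xbp xbp) = 1 := hQbp ▸ nonsing_inv_mul Qbp hQbpinv
  have hQ' : Q * (Qm⁻¹ + Qbp⁻¹ - 1) = 1 := hQ ▸ nonsing_inv_mul _ hQinv
  have he : (fun ω => x ω - xhat ω) =
      fun ω => x ω - ((Q * Qm⁻¹) *ᵥ xm ω + (Q * Qbp⁻¹) *ᵥ xbp ω) := by
    simp only [hxhat, mulVec_add, mulVec_mulVec]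
  have hm : cov ℙ xm x = cov ℙ xm xm := by rw [← cov_transpose, hcross1, cov_transpose]
  have hbp : cov ℙ xbp x = cov ℙ xbp xbp := by rw [← cov_transpose, hcross2, cov_transpose]
  have hmbp : cov ℙ xm xbp = cov ℙ xm xm * cov ℙ xbp xbp := by
    rw [← cov_transpose, hcross3, transpose_mul, cov_transpose, cov_transpose]
  have horth_m : cov ℙ (fun ω => x ω - ((Q * Qm⁻¹) *ᵥ xm ω + (Q * Qbp⁻¹) *ᵥ xbp ω)) xm = 0 := by
    rw [cov_sub_mulVec_add_mulVec_left _ _ hx2 hxm2 hxbp2 hxm2, hcross1, hcross3]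
    exact two_filter_orthogonal_left hT hQ'
  have horth_bp :
      cov ℙ (fun ω => x ω - ((Q * Qm⁻¹) *ᵥ xm ω + (Q * Qbp⁻¹) *ᵥ xbp ω)) xbp = 0 := by
    rw [cov_sub_mulVec_add_mulVec_left _ _ hx2 hxm2 hxbp2 hxbp2, hcross2, hmbp]
    exact two_filter_orthogonal_right hR hQ'
  rw [he, cov_self_eq_of_orthogonal _ _ hx2 hxm2 hxbp2 horth_m horth_bp,
    cov_sub_mulVec_add_mulVec_left _ _ hx2 hxm2 hxbp2 hx2, hnorm, hm, hbp,
    two_filter_error hR hT hQ', hQ, nonsing_inv_nonsing_inv _ hQinv]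

theorem stmt_11 {Ω : Type*} [MeasurableSpace Ω] (ℙ : Measure Ω) [IsProbabilityMeasure ℙ]
    {n : ℕ} (x xm xbp xhat : Ω → Fin n → ℝ)
    (hx2 : ∀ i, MemLp (fun ω => x ω i) 2 ℙ)
    (hxm2 : ∀ i, MemLp (fun ω => xm ω i) 2 ℙ)
    (hxbp2 : ∀ i, MemLp (fun ω => xbp ω i) 2 ℙ)
    (hx0 : ∀ i, ∫ ω, x ω i ∂ℙ = 0)
    (hxm0 : ∀ i, ∫ ω, xm ω i ∂ℙ = 0)
    (hxbp0 : ∀ i, ∫ ω, xbp ω i ∂ℙ = 0)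
    (hnorm : cov ℙ x x = 1)
    (Qm Qbp Q : Matrix (Fin n) (Fin n) ℝ)
    (hQm : Qm = 1 - cov ℙ xm xm) (hQbp : Qbp = 1 - cov ℙ xbp xbp)
    (hQminv : IsUnit Qm.det) (hQbpinv : IsUnit Qbp.det)
    (hcross1 : cov ℙ x xm = cov ℙ xm xm)
    (hcross2 : cov ℙ x xbp = cov ℙ xbp xbp)
    (hcross3 : cov ℙ xbp xm = cov ℙ xbp xbp * cov ℙ xm xm)
    (hQinv : IsUnit (Qm⁻¹ + Qbp⁻¹ - 1).det)
    (hQ : Q = (Qm⁻¹ + Qbp⁻¹ - 1)⁻¹)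
    (hxhat : xhat = fun ω => Q.mulVec (Qm⁻¹.mulVec (xm ω) + Qbp⁻¹.mulVec (xbp ω))) :
    (cov ℙ (fun ω => x ω - xhat ω) (fun ω => x ω - xhat ω))⁻¹ = Qm⁻¹ + Qbp⁻¹ - 1 :=
  stmt_11_general ℙ x xm xbp xhat hx2 hxm2 hxbp2 hnorm Qm Qbp Q hQm hQbp hQminv hQbpinv hcross1
    hcross2 hcross3 hQinv hQ hxhat
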